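/- arXiv:1512.06278 — 3 statements merged into one kernel-verified Lean document; each statement's English description precedes it below -/
import Mathlib

section
/- Let A B C P be points of the Euclidean plane (EuclideanSpace ℝ (Fin 2)) with A ≠ B and C ≠ B. Assume ∠ A B C = π/2, dist P A = dist P C, ∠ A P C = π/2, and that P and B lie strictly on opposite sides of the line through A and C (i.e., (affineSpan ℝ {A, C}).SOppSide P B). Then ∠ A B P = π/4 and ∠ P B C = π/4. -/
open Real EuclideanGeometry RealInnerProductSpace

lemma aux_angle_pi_div_four {V : Type*} [NormedAddCommGroup V] [InnerProductSpace ℝ V]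
    (u v : V) (hpos : 0 < ⟪u, v⟫) (hsq : 2 * ⟪u, v⟫ ^ 2 = ‖u‖ ^ 2 * ‖v‖ ^ 2) :
    InnerProductGeometry.angle u v = π / 4 := by
  have hs2 : Real.sqrt 2 ^ 2 = 2 := Real.sq_sqrt (by norm_num)
  have hs2pos : 0 < Real.sqrt 2 := by positivity
  have hn : ‖u‖ * ‖v‖ = Real.sqrt 2 * ⟪u, v⟫ := by
    have h1 : 0 ≤ ‖u‖ * ‖v‖ := by positivity
    have h2 : 0 ≤ Real.sqrt 2 * ⟪u, v⟫ := by positivity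
    have hsq' : (‖u‖ * ‖v‖) ^ 2 = (Real.sqrt 2 * ⟪u, v⟫) ^ 2 := by
      rw [mul_pow, mul_pow, hs2]; linarith
    nlinarith
  rw [InnerProductGeometry.angle, hn]
  have : ⟪u, v⟫ / (Real.sqrt 2 * ⟪u, v⟫) = Real.cos (π / 4) := by
    rw [Real.cos_pi_div_four, mul_comm, div_mul_eq_div_div_swap, div_div,
      div_eq_div_iff (by positivity) (by norm_num : (2:ℝ) ≠ 0)]
    nlinarith
  rw [this, Real.arccos_cos (by positivity) (by linarith [Real.pi_pos])]

set_option maxHeartbeats 1000000 in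
theorem square_center_bisects_right_angle
    (A B C P : EuclideanSpace ℝ (Fin 2)) (hAB : A ≠ B) (hCB : C ≠ B)
    (hB : ∠ A B C = π / 2)
    (hPA : dist P A = dist P C)
    (hP : ∠ A P C = π / 2)
    (hside : (affineSpan ℝ {A, C}).SOppSide P B) :
    ∠ A B P = π / 4 ∧ ∠ P B C = π / 4 := by
  have hpi := Real.pi_pos
  -- A ≠ C
  have hAC : A ≠ C := by
    rintro rfl
    rw [EuclideanGeometry.angle_self_of_ne hAB] at hB
    linarith
  set O : EuclideanSpace ℝ (Fin 2) := midpoint ℝ A C with hOdef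
  set a : EuclideanSpace ℝ (Fin 2) := A - O with hadef
  set b : EuclideanSpace ℝ (Fin 2) := B - O with hbdef
  set p : EuclideanSpace ℝ (Fin 2) := P - O with hpdef
  have ha' : a = (2⁻¹ : ℝ) • (A - C) := by
    rw [hadef, hOdef, ← vsub_eq_sub, left_vsub_midpoint, invOf_eq_inv, vsub_eq_sub]
  have hCa : C - O = -a := by
    rw [hOdef, ← vsub_eq_sub, right_vsub_midpoint, invOf_eq_inv, vsub_eq_sub, ha']
    module
  have hAB' : A - B = a - b := by rw [hadef, hbdef]; abel
  have hCB' : C - B = -a - b := by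
    have h : C - B = (C - O) - (B - O) := by abel
    rw [h, hCa, ← hbdef]
  have hPB' : P - B = p - b := by rw [hpdef, hbdef]; abel
  have hPA' : P - A = p - a := by rw [hpdef, hadef]; abel
  have hPC' : P - C = p + a := by
    have h : P - C = (P - O) - (C - O) := by abel
    rw [h, hCa, ← hpdef]; abel
  have ha0 : a ≠ 0 := by
    rw [ha']
    intro h
    rw [smul_eq_zero] at h
    rcases h with h | h
    · norm_num at h
    · exact hAC (sub_eq_zero.mp h)
  set r2 : ℝ := ⟪a, a⟫ with hr2def
  have hr2 : 0 < r2 := by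
    rw [hr2def, real_inner_self_eq_norm_sq]
    exact pow_pos (norm_pos_iff.mpr ha0) 2
  -- right angle at B
  have hBin : ⟪A - B, C - B⟫ = 0 := by
    rw [InnerProductGeometry.inner_eq_zero_iff_angle_eq_pi_div_two]
    rw [EuclideanGeometry.angle] at hB
    simpa using hB
  -- right angle at P
  have hPin : ⟪A - P, C - P⟫ = 0 := by
    rw [InnerProductGeometry.inner_eq_zero_iff_angle_eq_pi_div_two]
    rw [EuclideanGeometry.angle] at hP
    simpa using hP
  have hbb : ⟪b, b⟫ = r2 := by
    rw [hAB', hCB'] at hBin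
    simp only [inner_sub_left, inner_sub_right, inner_neg_left, inner_neg_right] at hBin
    rw [real_inner_comm b a] at hBin
    linarith
  have hpp : ⟪p, p⟫ = r2 := by
    have h1 : A - P = -(p - a) := by rw [← hPA']; abel
    have h2 : C - P = -(p + a) := by rw [← hPC']; abel
    rw [h1, h2] at hPin
    simp only [inner_neg_left, inner_neg_right, inner_sub_left, inner_add_right,
      inner_sub_right, inner_add_left, neg_neg] at hPin
    rw [real_inner_comm p a] at hPin
    linarith
  have hap : ⟪a, p⟫ = 0 := by
    have h := hPA
    rw [dist_eq_norm, dist_eq_norm, hPA', hPC'] at h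
    have h2 : ‖p - a‖ ^ 2 = ‖p + a‖ ^ 2 := by rw [h]
    rw [norm_sub_pow_two_real, norm_add_pow_two_real] at h2
    rw [real_inner_comm p a]
    linarith
  have hpa : ⟪p, a⟫ = 0 := by rw [real_inner_comm]; exact hap
  have hp0 : p ≠ 0 := by
    intro h
    rw [h, inner_zero_left] at hpp
    linarith
  set x : ℝ := ⟪a, b⟫ with hxdef
  set y : ℝ := ⟪p, b⟫ with hydef
  -- dimension 2: b in span of a, p
  have hli : LinearIndependent ℝ ![a, p] := by
    rw [LinearIndependent.pair_iff]
    intro s t hst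
    have h1 : ⟪a, s • a + t • p⟫ = 0 := by rw [hst, inner_zero_right]
    have h2 : ⟪p, s • a + t • p⟫ = 0 := by rw [hst, inner_zero_right]
    simp only [inner_add_right, real_inner_smul_right, hap, hpa, hpp, ← hr2def,
      mul_zero, add_zero, zero_add] at h1 h2
    constructor
    · exact (mul_eq_zero.mp h1).resolve_right (ne_of_gt hr2)
    · exact (mul_eq_zero.mp h2).resolve_right (ne_of_gt hr2)
  have hspan : Submodule.span ℝ ({a, p} : Set (EuclideanSpace ℝ (Fin 2))) = ⊤ := by
    have hrange : Set.range ![a, p] = ({a, p} : Set (EuclideanSpace ℝ (Fin 2))) := by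
      simp [Matrix.range_cons, Matrix.range_empty, Set.pair_comm]
    apply Submodule.eq_top_of_finrank_eq
    rw [← hrange, finrank_span_eq_card hli, finrank_euclideanSpace_fin]
    simp
  obtain ⟨s, t, hst⟩ : ∃ s t : ℝ, s • a + t • p = b := by
    rw [← Submodule.mem_span_pair, hspan]; trivial
  have hx : x = s * r2 := by
    rw [hxdef, ← hst]
    simp only [inner_add_right, real_inner_smul_right, hap, hpa, hpp, ← hr2def,
      mul_zero, add_zero, zero_add]
  have hy : y = t * r2 := by
    rw [hydef, ← hst]
    simp only [inner_add_right, real_inner_smul_right, hap, hpa, hpp, ← hr2def,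
      mul_zero, add_zero, zero_add]
  have hparseval : s * s * r2 + t * t * r2 = r2 := by
    have hbbs : ⟪b, b⟫ = s * s * r2 + t * t * r2 := by
      conv_lhs => rw [← hst]
      simp only [inner_add_left, inner_add_right, real_inner_smul_left, real_inner_smul_right,
        hap, hpa, hpp, ← hr2def, mul_zero, add_zero, zero_add]
      ring
    rw [hbb] at hbbs; linarith
  have hkey : x ^ 2 + y ^ 2 = r2 ^ 2 := by
    rw [hx, hy]; nlinarith [hparseval]
  -- side condition gives y < 0
  have hy_neg : y < 0 := by
    obtain ⟨⟨p₁, hp₁, p₂, hp₂, hray⟩, hPne, hBne⟩ := hside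
    have hOmem : O ∈ affineSpan ℝ ({A, C} : Set (EuclideanSpace ℝ (Fin 2))) := by
      have h : O = (⅟2 : ℝ) • (C -ᵥ A) +ᵥ A := by
        rw [hOdef, ← midpoint_vsub_left (R := ℝ), vsub_vadd]
      rw [h]
      exact smul_vsub_vadd_mem_affineSpan_pair _ _ _
    -- any point of the line minus O is a multiple of a
    have hdir : ∀ q ∈ affineSpan ℝ ({A, C} : Set (EuclideanSpace ℝ (Fin 2))),
        ∃ c : ℝ, q - O = c • a := by
      intro q hq
      have h1 : q -ᵥ O ∈ (affineSpan ℝ ({A, C} : Set (EuclideanSpace ℝ (Fin 2)))).direction :=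
        AffineSubspace.vsub_mem_direction hq hOmem
      rw [direction_affineSpan, vectorSpan_pair] at h1
      obtain ⟨c, hc⟩ := Submodule.mem_span_singleton.mp h1
      refine ⟨2 * c, ?_⟩
      have hACa : A -ᵥ C = (2 : ℝ) • a := by
        rw [vsub_eq_sub, ha', smul_smul]
        norm_num
      rw [← vsub_eq_sub, ← hc, hACa, smul_smul, mul_comm]
    obtain ⟨c₁, hc₁⟩ := hdir p₁ hp₁
    obtain ⟨c₂, hc₂⟩ := hdir p₂ hp₂
    have hu : P -ᵥ p₁ = p - c₁ • a := by
      rw [vsub_eq_sub, show P - p₁ = (P - O) - (p₁ - O) from by abel, hc₁, ← hpdef]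
    have hv : p₂ -ᵥ B = c₂ • a - b := by
      rw [vsub_eq_sub, show p₂ - B = (p₂ - O) - (B - O) from by abel, hc₂, ← hbdef]
    have hu0 : P -ᵥ p₁ ≠ 0 := fun h => hPne (by rwa [vsub_eq_zero_iff_eq.mp h])
    have hv0 : p₂ -ᵥ B ≠ 0 := fun h => hBne (by rwa [← vsub_eq_zero_iff_eq.mp h])
    obtain ⟨r₁, r₂, hr₁, hr₂, hrr⟩ := hray.exists_pos hu0 hv0
    rw [hu, hv] at hrr
    have hinner : ⟪p, r₁ • (p - c₁ • a)⟫ = ⟪p, r₂ • (c₂ • a - b)⟫ := by rw [hrr]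
    simp only [real_inner_smul_right, inner_sub_right, real_inner_smul_right] at hinner
    rw [hpa, hpp] at hinner
    -- r₁ * r2 = r₂ * (-y)
    simp only [mul_zero, sub_zero, zero_sub] at hinner
    rw [← hydef] at hinner
    nlinarith
  have hba : ⟪b, a⟫ = x := (real_inner_comm a b).trans hxdef.symm
  have hbp : ⟪b, p⟫ = y := (real_inner_comm p b).trans hydef.symm
  -- positivity facts
  have hab0 : a - b ≠ 0 := by rw [← hAB']; exact sub_ne_zero.mpr hAB
  have hcb0 : -a - b ≠ 0 := by rw [← hCB']; exact sub_ne_zero.mpr hCB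
  have hnab : ‖a - b‖ ^ 2 = 2 * (r2 - x) := by
    rw [norm_sub_pow_two_real, ← real_inner_self_eq_norm_sq, ← real_inner_self_eq_norm_sq,
      hbb, ← hr2def, ← hxdef]
    ring
  have hncb : ‖-a - b‖ ^ 2 = 2 * (r2 + x) := by
    have : -a - b = -(a + b) := by abel
    rw [this, norm_neg, norm_add_pow_two_real, ← real_inner_self_eq_norm_sq,
      ← real_inner_self_eq_norm_sq, hbb, ← hr2def, ← hxdef]
    ring
  have hnpb : ‖p - b‖ ^ 2 = 2 * (r2 - y) := by
    rw [norm_sub_pow_two_real, ← real_inner_self_eq_norm_sq, ← real_inner_self_eq_norm_sq,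
      hbb, hpp, ← hydef]
    ring
  have hrx : r2 - x > 0 := by
    have h0 : 0 < ‖a - b‖ ^ 2 := pow_pos (norm_pos_iff.mpr hab0) 2
    linarith [hnab]
  have hrx' : r2 + x > 0 := by
    have h0 : 0 < ‖-a - b‖ ^ 2 := pow_pos (norm_pos_iff.mpr hcb0) 2
    linarith [hncb]
  constructor
  · -- ∠ A B P
    rw [EuclideanGeometry.angle, show A -ᵥ B = a - b by rw [vsub_eq_sub]; exact hAB',
      show P -ᵥ B = p - b by rw [vsub_eq_sub]; exact hPB']
    apply aux_angle_pi_div_four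
    · have hipr : ⟪a - b, p - b⟫ = r2 - x - y := by
        simp only [inner_sub_left, inner_sub_right]
        rw [hap, hbb, ← hxdef, hbp]; ring
      rw [hipr]; linarith
    · have hipr : ⟪a - b, p - b⟫ = r2 - x - y := by
        simp only [inner_sub_left, inner_sub_right]
        rw [hap, hbb, ← hxdef, hbp]; ring
      rw [hipr, hnab, hnpb]
      linear_combination 2 * hkey
  · -- ∠ P B C
    rw [EuclideanGeometry.angle, show P -ᵥ B = p - b by rw [vsub_eq_sub]; exact hPB',
      show C -ᵥ B = -a - b by rw [vsub_eq_sub]; exact hCB']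
    apply aux_angle_pi_div_four
    · have hipr : ⟪p - b, -a - b⟫ = r2 + x - y := by
        simp only [inner_sub_left, inner_sub_right, inner_neg_left, inner_neg_right]
        rw [hpa, ← hydef, hba, hbb]; ring
      rw [hipr]; linarith
    · have hipr : ⟪p - b, -a - b⟫ = r2 + x - y := by
        simp only [inner_sub_left, inner_sub_right, inner_neg_left, inner_neg_right]
        rw [hpa, ← hydef, hba, hbb]; ring
      rw [hipr, hnpb, hncb]
      linear_combination 2 * hkey
end

section
/- Let A B C D be points of the Euclidean plane (EuclideanSpace ℝ (Fin 2)) such that B and D lie strictly on opposite sides of the line through A and C ((affineSpan ℝ {A, C}).SOppSide B D) and A and C lie strictly on opposite sides of the line through B and D ((affineSpan ℝ {B, D}).SOppSide A C). Then ∠ D A B + ∠ A B C + ∠ B C D + ∠ C D A = 2 * π. -/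
/-!
The diagonals of a convex quadrilateral `ABCD` meet at a point `E` strictly inside both. Since
`E` lies on the segment `BD` and on the ray `AC`, the diagonal `AC` splits the angle at `A` into
`∠ D A C + ∠ C A B`, and likewise at `C`. The four corner angles therefore add up to the angle
sums of the triangles `ABC` and `ACD`, that is, to `π + π`.
-/

open Real EuclideanGeometry

section Crossing

variable {V P : Type*} [AddCommGroup V] [Module ℝ V] [AddTorsor V P]

theorem exists_sbtw_sbtw_of_sOppSide {A B C D : P}
    (hAC : (affineSpan ℝ {A, C}).SOppSide B D) (hBD : (affineSpan ℝ {B, D}).SOppSide A C) :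
    ∃ E, Sbtw ℝ A E C ∧ Sbtw ℝ B E D := by
  obtain ⟨E, hE_AC, hBED⟩ := hAC.exists_sbtw
  obtain ⟨F, hF_BD, hAFC⟩ := hBD.exists_sbtw
  refine ⟨E, ?_, hBED⟩
  suffices hEF : E = F by rwa [hEF]
  by_contra hEF
  have hcol : Collinear ℝ ({E, F, A, C} : Set P) :=
    collinear_insert_insert_of_mem_affineSpan_pair hE_AC hAFC.wbtw.mem_affineSpan
  have hA_EF : A ∈ affineSpan ℝ ({E, F} : Set P) :=
    hcol.mem_affineSpan_of_mem_of_ne (by simp) (by simp) (by simp) hEF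
  have hEF_BD : affineSpan ℝ ({E, F} : Set P) ≤ affineSpan ℝ {B, D} :=
    affineSpan_pair_le_of_mem_of_mem hBED.wbtw.mem_affineSpan hF_BD
  exact hBD.left_notMem (hEF_BD hA_EF)

end Crossing

section Angles

variable {V P : Type*} [NormedAddCommGroup V] [InnerProductSpace ℝ V] [MetricSpace P]
  [NormedAddTorsor V P]

theorem angle_eq_angle_add_angle_of_sbtw_of_sbtw {A B C D E : P} (hAEC : Sbtw ℝ A E C)
    (hBED : Sbtw ℝ B E D) : ∠ B A D = ∠ B A C + ∠ C A D := by
  rw [← angle_add_angle_eq_of_sbtw hBED, hAEC.angle_eq_right, hAEC.angle_eq_left]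

end Angles

theorem convex_quadrilateral_angle_sum
    (A B C D : EuclideanSpace ℝ (Fin 2))
    (hAC : (affineSpan ℝ {A, C}).SOppSide B D)
    (hBD : (affineSpan ℝ {B, D}).SOppSide A C) :
    ∠ D A B + ∠ A B C + ∠ B C D + ∠ C D A = 2 * π := by
  obtain ⟨E, hAEC, hBED⟩ := exists_sbtw_sbtw_of_sOppSide hAC hBD
  have hA : ∠ D A B = ∠ D A C + ∠ C A B :=
    angle_eq_angle_add_angle_of_sbtw_of_sbtw hAEC hBED.symm
  have hC : ∠ B C D = ∠ B C A + ∠ A C D :=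
    angle_eq_angle_add_angle_of_sbtw_of_sbtw hAEC.symm hBED
  have hABC := angle_add_angle_add_angle_eq_pi B hAEC.left_ne_right.symm
  have hACD := angle_add_angle_add_angle_eq_pi D hAEC.left_ne_right.symm
  linarith [angle_comm A C B, angle_comm C B A, angle_comm B A C]
end

section
/- Let A B C be an affinely independent triple of points of the Euclidean plane (EuclideanSpace ℝ (Fin 2)) and let X be a point lying strictly between B and C (Sbtw ℝ B X C). If ∠ B A X = ∠ X A C, then dist A C * dist B X = dist A B * dist C X. -/
open Real EuclideanGeometry

lemma sin_angle_vec (V : Type*) [NormedAddCommGroup V] [InnerProductSpace ℝ V] (x y : V) :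
    Real.sin (InnerProductGeometry.angle x y) * (‖x‖ * ‖y‖) =
      Real.sin (InnerProductGeometry.angle x (x - y)) * (‖x‖ * ‖x - y‖) := by
  rw [InnerProductGeometry.sin_angle_mul_norm_mul_norm,
    InnerProductGeometry.sin_angle_mul_norm_mul_norm]
  congr 1
  simp only [inner_sub_left, inner_sub_right, real_inner_comm x y]
  ring

/-- Law of sines ingredient: twice-area expressed at two vertices. -/
lemma sin_angle_pt {V P : Type*} [NormedAddCommGroup V] [InnerProductSpace ℝ V]
    [MetricSpace P] [NormedAddTorsor V P] (p q r : P) :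
    Real.sin (∠ q p r) * (dist p q * dist p r) =
      Real.sin (∠ p q r) * (dist q p * dist q r) := by
  have h := sin_angle_vec V (q -ᵥ p) (r -ᵥ p)
  rw [vsub_sub_vsub_cancel_right] at h
  have h2 : ∠ p q r = InnerProductGeometry.angle (q -ᵥ p) (q -ᵥ r) := by
    rw [EuclideanGeometry.angle, ← InnerProductGeometry.angle_neg_neg]
    simp [neg_vsub_eq_vsub_rev]
  rw [EuclideanGeometry.angle, h2, dist_eq_norm_vsub' V p q, dist_eq_norm_vsub' V p r,
    dist_eq_norm_vsub V q p, dist_eq_norm_vsub V q r]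
  exact h

theorem angle_bisector_theorem
    (A B C X : EuclideanSpace ℝ (Fin 2))
    (hABC : AffineIndependent ℝ ![A, B, C])
    (hX : Sbtw ℝ B X C)
    (hbis : ∠ B A X = ∠ X A C) :
    dist A C * dist B X = dist A B * dist C X := by
  have hnc : ¬ Collinear ℝ ({A, B, C} : Set (EuclideanSpace ℝ (Fin 2))) :=
    affineIndependent_iff_not_collinear_set.mp hABC
  have hXBC : X ∈ line[ℝ, B, C] := hX.wbtw.mem_affineSpan
  have hXB : X ≠ B := hX.ne_left
  have hXC : X ≠ C := hX.ne_right
  -- A is not collinear with X and B (or X and C)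
  have key : ∀ p : EuclideanSpace ℝ (Fin 2), p = B ∨ p = C → p ≠ X →
      ¬ Collinear ℝ ({A, X, p} : Set (EuclideanSpace ℝ (Fin 2))) := by
    intro p hp hpX hcol
    have hA : A ∈ line[ℝ, X, p] :=
      hcol.mem_affineSpan_of_mem_of_ne (Set.mem_insert_of_mem _ (Set.mem_insert _ _))
        (Set.mem_insert_of_mem _ (Set.mem_insert_of_mem _ rfl)) (Set.mem_insert _ _) hpX.symm
    have hp' : p ∈ line[ℝ, B, C] := by
      rcases hp with rfl | rfl
      · exact left_mem_affineSpan_pair ℝ _ _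
      · exact right_mem_affineSpan_pair ℝ _ _
    have hle : line[ℝ, X, p] ≤ line[ℝ, B, C] := by
      apply affineSpan_le.mpr
      rintro q (rfl | rfl) <;> simpa
    exact hnc ((collinear_insert_of_mem_affineSpan_pair (hle hA)))
  have hsin : ∀ p : EuclideanSpace ℝ (Fin 2), p = B ∨ p = C → p ≠ X →
      0 < Real.sin (∠ p A X) := by
    intro p hp hpX
    apply Real.sin_pos_of_pos_of_lt_pi
    · rcases lt_or_eq_of_le (EuclideanGeometry.angle_nonneg p A X) with h | h
      · exact h
      · exact absurd (collinear_of_angle_eq_zero h.symm)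
          (by
            have := key p hp hpX
            intro hc
            exact this (by
              have : ({p, A, X} : Set _) = {A, X, p} := by
                ext; simp; tauto
              rw [this] at hc; exact hc))
    · rcases lt_or_eq_of_le (EuclideanGeometry.angle_le_pi p A X) with h | h
      · exact h
      · exact absurd (collinear_of_angle_eq_pi h)
          (by
            have := key p hp hpX
            intro hc
            exact this (by
              have : ({p, A, X} : Set _) = {A, X, p} := by
                ext; simp; tauto
              rw [this] at hc; exact hc))
  have hsinX : ∀ p : EuclideanSpace ℝ (Fin 2), p = B ∨ p = C → p ≠ X →
      0 < Real.sin (∠ A X p) := by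
    intro p hp hpX
    apply Real.sin_pos_of_pos_of_lt_pi
    · rcases lt_or_eq_of_le (EuclideanGeometry.angle_nonneg A X p) with h | h
      · exact h
      · exact absurd (collinear_of_angle_eq_zero h.symm)
          (by
            have := key p hp hpX
            intro hc
            exact this (by
              have : ({A, X, p} : Set _) = {A, X, p} := rfl
              rw [this] at hc; exact hc))
    · rcases lt_or_eq_of_le (EuclideanGeometry.angle_le_pi A X p) with h | h
      · exact h
      · exact absurd (collinear_of_angle_eq_pi h) (key p hp hpX)
  -- angles at X sum to π
  have hBXC : ∠ B X C = π := angle_eq_pi_iff_sbtw.mpr hX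
  have hsum : ∠ A X B + ∠ A X C = π :=
    EuclideanGeometry.angle_add_angle_eq_pi_of_angle_eq_pi A hBXC
  have hsinEq : Real.sin (∠ A X B) = Real.sin (∠ A X C) := by
    rw [show ∠ A X B = π - ∠ A X C by linarith, Real.sin_pi_sub]
  -- law of sines in both triangles
  have e1 := sin_angle_pt A X B
  have e2 := sin_angle_pt A X C
  -- e1 : sin (∠ X A B) * (dist A X * dist A B) = sin (∠ A X B) * (dist X A * dist X B)
  have hXAB : ∠ X A B = ∠ B A X := EuclideanGeometry.angle_comm _ _ _
  have hXAC : ∠ X A C = ∠ X A C := rfl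
  rw [hXAB, hbis] at e1
  have hsB := hsin B (Or.inl rfl) hXB.symm
  have hsC := hsin C (Or.inr rfl) hXC.symm
  have htB := hsinX B (Or.inl rfl) hXB.symm
  -- combine
  have hAX : dist A X ≠ 0 := by
    intro h
    rw [dist_eq_zero] at h
    subst h
    exact hnc (collinear_insert_of_mem_affineSpan_pair hXBC)
  have hs : Real.sin (∠ X A C) ≠ 0 := by
    have : ∠ X A C = ∠ C A X := EuclideanGeometry.angle_comm _ _ _
    rw [this]; exact hsC.ne'
  rw [hsinEq] at e1
  -- e1 : s * (dist A X * dist A B) = t * (dist X A * dist X B)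
  -- e2 : s' * (dist A X * dist A C) = t * (dist X A * dist X C), with ∠ X A C angle
  have hXAC' : ∠ X A C = ∠ X A C := rfl
  have e2' : Real.sin (∠ X A C) * (dist A X * dist A C) =
      Real.sin (∠ A X C) * (dist X A * dist X C) := e2
  -- goal: dist A C * dist B X = dist A B * dist C X
  have h1 : Real.sin (∠ X A C) * (dist A X * dist A B) * (dist X C) =
      Real.sin (∠ A X C) * (dist X A * dist X B) * (dist X C) := by rw [e1]
  have h2 : Real.sin (∠ X A C) * (dist A X * dist A C) * (dist X B) =
      Real.sin (∠ A X C) * (dist X A * dist X C) * (dist X B) := by rw [e2']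
  have hcancel : Real.sin (∠ X A C) * dist A X ≠ 0 := mul_ne_zero hs hAX
  have h3 : Real.sin (∠ X A C) * dist A X * (dist A B * dist X C) =
      Real.sin (∠ X A C) * dist A X * (dist A C * dist X B) := by
    calc Real.sin (∠ X A C) * dist A X * (dist A B * dist X C)
        = Real.sin (∠ X A C) * (dist A X * dist A B) * dist X C := by ring
      _ = Real.sin (∠ A X C) * (dist X A * dist X B) * dist X C := by rw [e1]
      _ = Real.sin (∠ A X C) * (dist X A * dist X C) * dist X B := by ring
      _ = Real.sin (∠ X A C) * (dist A X * dist A C) * dist X B := by rw [e2']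
      _ = Real.sin (∠ X A C) * dist A X * (dist A C * dist X B) := by ring
  have hfinal := mul_left_cancel₀ hcancel h3
  rw [dist_comm B X, dist_comm C X]
  exact hfinal.symm
end
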